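/- arXiv:2310.00285 — 3 statements merged into one kernel-verified Lean document; each statement's English description precedes it below -/
import Mathlib

section
/- Any two traceless 2×2 Hermitian matrices can be simultaneously conjugated by a single unitary so that both resulting matrices have vanishing diagonal entries. -/
open Matrix Complex


lemma exists_unit_orth (p q : EuclideanSpace ℝ (Fin 3)) :
    ∃ n : EuclideanSpace ℝ (Fin 3), ‖n‖ = 1 ∧
      inner ℝ n p = 0 ∧ inner ℝ n q = 0 := by
  set K : Submodule ℝ (EuclideanSpace ℝ (Fin 3)) := Submodule.span ℝ {p, q} with hKdef
  have hKne : K ≠ ⊤ := by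
    intro h
    have h1 : Module.finrank ℝ K ≤ 2 := by
      classical
      calc Module.finrank ℝ K ≤ ({p, q} : Set _).toFinset.card :=
            finrank_span_le_card _
        _ ≤ 2 := by
            simp only [Set.toFinset_insert, Set.toFinset_singleton]
            exact (Finset.card_insert_le _ _).trans (by simp)
    rw [h] at h1
    have : Module.finrank ℝ (EuclideanSpace ℝ (Fin 3)) = 3 := by simp
    rw [finrank_top] at h1
    omega
  have hbot : Kᗮ ≠ ⊥ := by
    simpa [Submodule.orthogonal_eq_bot_iff] using hKne
  obtain ⟨v, hvK, hv0⟩ := (Submodule.ne_bot_iff _).mp hbot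
  refine ⟨‖v‖⁻¹ • v, ?_, ?_, ?_⟩
  · rw [norm_smul]; simp [norm_ne_zero_iff.mpr hv0]
  · have : inner ℝ v p = 0 := by
      have := hvK p (Submodule.subset_span (by simp))
      rwa [real_inner_comm] at this
    rw [inner_smul_left]; simp [this]
  · have : inner ℝ v q = 0 := by
      have := hvK q (Submodule.subset_span (by simp))
      rwa [real_inner_comm] at this
    rw [inner_smul_left]; simp [this]


set_option maxHeartbeats 1600000 in
lemma main_aux (A B : Matrix (Fin 2) (Fin 2) ℂ) (a b x y xb yb n1 n2 n3 : ℝ)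
    (hA00 : A 0 0 = a) (hA01 : A 0 1 = (x:ℂ) - y*I) (hA10 : A 1 0 = (x:ℂ) + y*I)
    (hA11 : A 1 1 = -(a:ℂ))
    (hB00 : B 0 0 = b) (hB01 : B 0 1 = (xb:ℂ) - yb*I) (hB10 : B 1 0 = (xb:ℂ) + yb*I)
    (hB11 : B 1 1 = -(b:ℂ))
    (hn : n1^2+n2^2+n3^2 = 1) (h3 : 0 ≤ n3)
    (hpA : n1*x + n2*y + n3*a = 0) (hpB : n1*xb + n2*yb + n3*b = 0) :
    ∃ U : Matrix (Fin 2) (Fin 2) ℂ, U ∈ Matrix.unitaryGroup (Fin 2) ℂ ∧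
      (Uᴴ * A * U) 0 0 = 0 ∧ (Uᴴ * A * U) 1 1 = 0 ∧
      (Uᴴ * B * U) 0 0 = 0 ∧ (Uᴴ * B * U) 1 1 = 0 := by
  set s := Real.sqrt (2*(1+n3)) with hsdef
  have hs0 : 0 < s := Real.sqrt_pos.mpr (by linarith)
  have hs2 : s^2 = 2*(1+n3) := Real.sq_sqrt (by linarith)
  have hsC : (s:ℂ) ≠ 0 := by exact_mod_cast hs0.ne'
  have hs2C : (s:ℂ)^2 = 2*(1+(n3:ℂ)) := by exact_mod_cast hs2
  have hnC : (n1:ℂ)^2+(n2:ℂ)^2+(n3:ℂ)^2 = 1 := by exact_mod_cast hn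
  have hpAC : (n1:ℂ)*x + (n2:ℂ)*y + (n3:ℂ)*a = 0 := by exact_mod_cast hpA
  have hpBC : (n1:ℂ)*xb + (n2:ℂ)*yb + (n3:ℂ)*b = 0 := by exact_mod_cast hpB
  set u0 : ℂ := ((1:ℂ)+n3)/s with hu0
  set u1 : ℂ := ((n1:ℂ) + n2*I)/s with hu1
  refine ⟨!![u0, -(starRingEnd ℂ) u1; u1, (starRingEnd ℂ) u0], ?_, ?_, ?_, ?_, ?_⟩
  · rw [Matrix.mem_unitaryGroup_iff']
    ext i j
    fin_cases i <;> fin_cases j <;>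
      simp [Matrix.mul_apply, Fin.sum_univ_two, Matrix.one_apply, hu0, hu1,
        map_div₀, Complex.conj_ofReal] <;>
      field_simp
    · linear_combination (-(n2:ℂ)^2)*Complex.I_sq + hnC - hs2C
    · ring
    · ring
    · linear_combination (-(n2:ℂ)^2)*Complex.I_sq + hnC - hs2C
  · simp [Matrix.mul_apply, Fin.sum_univ_two, hA00, hA01, hA10, hA11, hu0, hu1,
      map_div₀, Complex.conj_ofReal]
    field_simp
    linear_combination (2*(1+(n3:ℂ)))*hpAC + ((-2)*(n3:ℂ)*n2*y + (a:ℂ)*n2^2 - 2*(n2:ℂ)*y)*Complex.I_sq + (-(a:ℂ))*hnC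
  · simp [Matrix.mul_apply, Fin.sum_univ_two, hA00, hA01, hA10, hA11, hu0, hu1,
      map_div₀, Complex.conj_ofReal]
    field_simp
    linear_combination (-2*(1+(n3:ℂ)))*hpAC + ((2*(n2:ℂ)*n3*y + 2*(n2:ℂ)*y - (n2:ℂ)^2*a))*Complex.I_sq + ((a:ℂ))*hnC
  · simp [Matrix.mul_apply, Fin.sum_univ_two, hB00, hB01, hB10, hB11, hu0, hu1,
      map_div₀, Complex.conj_ofReal]
    field_simp
    linear_combination (2*(1+(n3:ℂ)))*hpBC + ((-2)*(n3:ℂ)*n2*yb + (b:ℂ)*n2^2 - 2*(n2:ℂ)*yb)*Complex.I_sq + (-(b:ℂ))*hnC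
  · simp [Matrix.mul_apply, Fin.sum_univ_two, hB00, hB01, hB10, hB11, hu0, hu1,
      map_div₀, Complex.conj_ofReal]
    field_simp
    linear_combination (-2*(1+(n3:ℂ)))*hpBC + ((2*(n2:ℂ)*n3*yb + 2*(n2:ℂ)*yb - (n2:ℂ)^2*b))*Complex.I_sq + ((b:ℂ))*hnC

theorem two_traceless_hermitian_simultaneous_hollowization
    (A B : Matrix (Fin 2) (Fin 2) ℂ)
    (hAh : A.IsHermitian) (hBh : B.IsHermitian)
    (hAt : A.trace = 0) (hBt : B.trace = 0) :
    ∃ U : Matrix (Fin 2) (Fin 2) ℂ, U ∈ Matrix.unitaryGroup (Fin 2) ℂ ∧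
      (Uᴴ * A * U) 0 0 = 0 ∧ (Uᴴ * A * U) 1 1 = 0 ∧
      (Uᴴ * B * U) 0 0 = 0 ∧ (Uᴴ * B * U) 1 1 = 0 := by
  set a := (A 0 0).re with ha
  set x := (A 0 1).re with hx
  set y := -(A 0 1).im with hy
  set b := (B 0 0).re with hb
  set xb := (B 0 1).re with hxb
  set yb := -(B 0 1).im with hyb
  have hA00 : A 0 0 = (a:ℂ) := by
    have h00 : (starRingEnd ℂ) (A 0 0) = A 0 0 := hAh.apply 0 0
    rw [Complex.conj_eq_iff_re] at h00; exact h00.symm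
  have hB00 : B 0 0 = (b:ℂ) := by
    have h00 : (starRingEnd ℂ) (B 0 0) = B 0 0 := hBh.apply 0 0
    rw [Complex.conj_eq_iff_re] at h00; exact h00.symm
  have hA11 : A 1 1 = -(a:ℂ) := by
    have := Matrix.trace_fin_two A; rw [hAt] at this
    linear_combination -this - hA00
  have hB11 : B 1 1 = -(b:ℂ) := by
    have := Matrix.trace_fin_two B; rw [hBt] at this
    linear_combination -this - hB00
  have hA01 : A 0 1 = (x:ℂ) - y*I := by
    rw [hx, hy]; apply Complex.ext <;> simp
  have hB01 : B 0 1 = (xb:ℂ) - yb*I := by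
    rw [hxb, hyb]; apply Complex.ext <;> simp
  have hA10 : A 1 0 = (x:ℂ) + y*I := by
    have := hAh.apply 1 0
    rw [← this, hA01]; simp [map_sub, Complex.conj_ofReal]
  have hB10 : B 1 0 = (xb:ℂ) + yb*I := by
    have := hBh.apply 1 0
    rw [← this, hB01]; simp [map_sub, Complex.conj_ofReal]
  obtain ⟨n, hn1, hnp, hnq⟩ := exists_unit_orth (WithLp.toLp 2 ![x, y, a]) (WithLp.toLp 2 ![xb, yb, b])
  have hnn : n 0 ^ 2 + n 1 ^ 2 + n 2 ^ 2 = 1 := by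
    have h := real_inner_self_eq_norm_sq n
    rw [hn1] at h
    simp only [PiLp.inner_apply, Fin.sum_univ_three, RCLike.inner_apply, conj_trivial] at h
    nlinarith [h]
  have hpA : n 0 * x + n 1 * y + n 2 * a = 0 := by
    simpa [PiLp.inner_apply, Fin.sum_univ_three, mul_comm] using hnp
  have hpB : n 0 * xb + n 1 * yb + n 2 * b = 0 := by
    simpa [PiLp.inner_apply, Fin.sum_univ_three, mul_comm] using hnq
  rcases le_total 0 (n 2) with h3 | h3
  · exact main_aux A B a b x y xb yb (n 0) (n 1) (n 2)
      hA00 hA01 hA10 hA11 hB00 hB01 hB10 hB11 hnn h3 hpA hpB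
  · exact main_aux A B a b x y xb yb (-(n 0)) (-(n 1)) (-(n 2))
      hA00 hA01 hA10 hA11 hB00 hB01 hB10 hB11 (by nlinarith [hnn])
      (by linarith) (by linarith [hpA]) (by linarith [hpB])
end

section
/- Let ψ, ψ⊥, ψ₁, ψ₂ be unit vectors in a finite-dimensional complex Hilbert space with ⟨ψ|ψ⊥⟩ = 0 and ⟨ψ₁|ψ₂⟩ = 0, and let c > 0. If 2c(|ψ⟩⟨ψ⊥| − |ψ⊥⟩⟨ψ|) = 2ic(|ψ₁⟩⟨ψ₁| − |ψ₂⟩⟨ψ₂|), then |⟨ψ₁|ψ⟩| = |⟨ψ₂|ψ⟩| = 1/√2. -/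
open Matrix

lemma key_dot {n : ℕ} (u v x y : Fin n → ℂ) :
    star u ⬝ᵥ ((vecMulVec x (star y)) *ᵥ v) = (star u ⬝ᵥ x) * (star y ⬝ᵥ v) := by
  simp [vecMulVec, dotProduct, mulVec, Finset.mul_sum, Finset.sum_mul]
  rw [Finset.sum_comm]
  congr 1; ext i; congr 1; ext j; ring

lemma cdot {n : ℕ} (u v : Fin n → ℂ) : star u ⬝ᵥ v = star (star v ⬝ᵥ u) := by
  simp [dotProduct, mul_comm]

theorem overlap_one_over_sqrt_two
    {n : ℕ} (ψ ψp ψ₁ ψ₂ : Fin n → ℂ)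
    (hψ : star ψ ⬝ᵥ ψ = 1) (hψp : star ψp ⬝ᵥ ψp = 1)
    (hψ₁ : star ψ₁ ⬝ᵥ ψ₁ = 1) (hψ₂ : star ψ₂ ⬝ᵥ ψ₂ = 1)
    (horth : star ψ ⬝ᵥ ψp = 0) (horth12 : star ψ₁ ⬝ᵥ ψ₂ = 0)
    (c : ℝ) (hc : 0 < c)
    (heq : ((2 * c : ℝ) : ℂ) • (vecMulVec ψ (star ψp) - vecMulVec ψp (star ψ)) =
        (2 * Complex.I * c) • (vecMulVec ψ₁ (star ψ₁) - vecMulVec ψ₂ (star ψ₂))) :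
    ‖star ψ₁ ⬝ᵥ ψ‖ = 1 / Real.sqrt 2 ∧
    ‖star ψ₂ ⬝ᵥ ψ‖ = 1 / Real.sqrt 2 := by
  set a1 := star ψ₁ ⬝ᵥ ψ with ha1
  set a2 := star ψ₂ ⬝ᵥ ψ with ha2
  set b1 := star ψ₁ ⬝ᵥ ψp with hb1d
  set b2 := star ψ₂ ⬝ᵥ ψp with hb2d
  have hpψ : star ψp ⬝ᵥ ψ = 0 := by rw [cdot, horth, star_zero]
  have h21 : star ψ₂ ⬝ᵥ ψ₁ = 0 := by rw [cdot, horth12, star_zero]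
  have hψa1 : star ψ ⬝ᵥ ψ₁ = star a1 := cdot ψ ψ₁
  have hψa2 : star ψ ⬝ᵥ ψ₂ = star a2 := cdot ψ ψ₂
  have hpb1 : star ψp ⬝ᵥ ψ₁ = star b1 := cdot ψp ψ₁
  have hpb2 : star ψp ⬝ᵥ ψ₂ = star b2 := cdot ψp ψ₂
  have key4 : ∀ u v : Fin n → ℂ,
      (2*(c:ℂ)) * ((star u ⬝ᵥ ψ)*(star ψp ⬝ᵥ v) - (star u ⬝ᵥ ψp)*(star ψ ⬝ᵥ v)) =
      (2*Complex.I*(c:ℂ)) * ((star u ⬝ᵥ ψ₁)*(star ψ₁ ⬝ᵥ v) - (star u ⬝ᵥ ψ₂)*(star ψ₂ ⬝ᵥ v)) := by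
    intro u v
    have h := congrArg (fun M => star u ⬝ᵥ (M *ᵥ v)) heq
    simp only [smul_mulVec, sub_mulVec, dotProduct_smul, dotProduct_sub, key_dot,
      smul_eq_mul] at h
    push_cast at h
    linear_combination h
  have hc0 : (c:ℂ) ≠ 0 := by exact_mod_cast hc.ne'
  have h2c : (2*(c:ℂ)) ≠ 0 := by simp [hc0]
  have h2Ic : (2*Complex.I*(c:ℂ)) ≠ 0 := by simp [hc0, Complex.I_ne_zero]
  have e1 := key4 ψ₁ ψ
  rw [hψ, hψ₁, hpψ, horth12, ← ha1, ← ha2, ← hb1d] at e1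
  have e2 := key4 ψ₂ ψ
  rw [hψ, hψ₂, hpψ, h21, ← ha1, ← ha2, ← hb2d] at e2
  have e3 := key4 ψ ψ
  rw [hψ, horth, hpψ, hψa1, hψa2, ← ha1, ← ha2] at e3
  have e4 := key4 ψp ψ
  rw [hψ, hψp, hpψ, hpb1, hpb2, ← ha1, ← ha2] at e4
  have hb1 : b1 = -Complex.I * a1 := by
    apply mul_left_cancel₀ h2c; linear_combination -e1
  have hb2 : b2 = Complex.I * a2 := by
    apply mul_left_cancel₀ h2c; linear_combination -e2
  have hsb1 : star b1 = Complex.I * star a1 := by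
    rw [hb1, star_mul', star_neg, Complex.star_def, Complex.conj_I, neg_neg]
  have hsb2 : star b2 = -Complex.I * star a2 := by
    rw [hb2, star_mul', Complex.star_def, Complex.conj_I]
  rw [hsb1, hsb2] at e4
  have hns : star a1 * a1 = star a2 * a2 := by
    apply mul_left_cancel₀ h2Ic; linear_combination -e3
  have hsum : star a1 * a1 + star a2 * a2 = 1 := by
    apply mul_left_cancel₀ h2c
    linear_combination e4 +
      (2*(c:ℂ)*(star a1*a1 + star a2*a2)) * Complex.I_mul_I
  have m1 : star a1 * a1 = (Complex.normSq a1 : ℂ) := by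
    rw [Complex.star_def, mul_comm, Complex.mul_conj]
  have m2 : star a2 * a2 = (Complex.normSq a2 : ℂ) := by
    rw [Complex.star_def, mul_comm, Complex.mul_conj]
  rw [m1, m2] at hns hsum
  have hnsR : Complex.normSq a1 = Complex.normSq a2 := by exact_mod_cast hns
  have hsumR : Complex.normSq a1 + Complex.normSq a2 = 1 := by exact_mod_cast hsum
  have h1 : Complex.normSq a1 = 1/2 := by linarith
  have h2 : Complex.normSq a2 = 1/2 := by linarith
  have habs : ∀ z : ℂ, Complex.normSq z = 1/2 → ‖z‖ = 1 / Real.sqrt 2 := by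
    intro z hz
    rw [Complex.norm_def, hz, show (1:ℝ)/2 = (2:ℝ)⁻¹ by norm_num, Real.sqrt_inv, one_div]
  exact ⟨habs a1 h1, habs a2 h2⟩
end

section
/- Let ψ₁ and ψ₂ be orthonormal vectors in (ℂ²)^{⊗N}, θ' a real number, and ψ = (ψ₁ + e^{−iθ'} ψ₂)/√2 (a GHZ-type state with ψ₁, ψ₂ taken as product basis vectors |a₁…a_N⟩, |b₁…b_N⟩ with ⟨aᵢ|bᵢ⟩ = 0). Set L = 2(|ψ⟩⟨∂ψ| + |∂ψ⟩⟨ψ|) with ∂ψ := −i θ'' ψ₂ e^{−iθ'} /√2 for a real constant θ'' (the derivative of the phase). Then M = [|ψ⟩⟨ψ|, L] = −i θ''(|ψ₁⟩⟨ψ₁| − |ψ₂⟩⟨ψ₂|); in particular M is diagonal in any orthonormal basis containing ψ₁ and ψ₂. -/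
open Matrix

private lemma vmv_mul {n : Type*} [Fintype n] [DecidableEq n] (u v x y : n → ℂ) :
    vecMulVec u v * vecMulVec x y = (v ⬝ᵥ x) • vecMulVec u y := by
  ext i j
  simp only [Matrix.mul_apply, vecMulVec_apply, Matrix.smul_apply, dotProduct,
    Finset.sum_mul, smul_eq_mul]
  exact Finset.sum_congr rfl fun k _ => by ring

theorem ghz_state_M_matrix_diagonal
    {N : ℕ} (a b : Fin N → (Fin 2 → ℂ))
    (hab : ∀ i, star (a i) ⬝ᵥ b i = 0)
    (ψ₁ ψ₂ : (Fin N → Fin 2) → ℂ)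
    (hψ₁ : ψ₁ = fun v => ∏ i, a i (v i))
    (hψ₂ : ψ₂ = fun v => ∏ i, b i (v i))
    (hψ₁n : star ψ₁ ⬝ᵥ ψ₁ = 1) (hψ₂n : star ψ₂ ⬝ᵥ ψ₂ = 1)
    (horth : star ψ₁ ⬝ᵥ ψ₂ = 0)
    (θ' θ'' : ℝ)
    (ψ dψ : (Fin N → Fin 2) → ℂ)
    (hψ : ψ = ((Real.sqrt 2 : ℂ))⁻¹ • (ψ₁ + Complex.exp (-Complex.I * θ') • ψ₂))
    (hdψ : dψ = ((-Complex.I * θ'' * Complex.exp (-Complex.I * θ')) * ((Real.sqrt 2 : ℂ))⁻¹) • ψ₂)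
    (L M : Matrix (Fin N → Fin 2) (Fin N → Fin 2) ℂ)
    (hL : L = (2 : ℂ) • (vecMulVec ψ (star dψ) + vecMulVec dψ (star ψ)))
    (hM : M = vecMulVec ψ (star ψ) * L - L * vecMulVec ψ (star ψ)) :
    M = (-Complex.I * θ'') • (vecMulVec ψ₁ (star ψ₁) - vecMulVec ψ₂ (star ψ₂)) := by
  set e : ℂ := Complex.exp (-Complex.I * θ') with he
  set t : ℂ := ((Real.sqrt 2 : ℝ) : ℂ)⁻¹ with ht
  have hene : e ≠ 0 := Complex.exp_ne_zero _
  have hce : (starRingEnd ℂ) e = e⁻¹ := by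
    rw [he, ← Complex.exp_conj, ← Complex.exp_neg]
    congr 1
    simp [Complex.conj_ofReal]
  have hct : (starRingEnd ℂ) t = t := by
    rw [ht, map_inv₀, Complex.conj_ofReal]
  have ht2 : t * t = 1 / 2 := by
    rw [ht, ← mul_inv, show ((Real.sqrt 2 : ℝ) : ℂ) * ((Real.sqrt 2 : ℝ) : ℂ) = 2 by
      rw [← Complex.ofReal_mul, Real.mul_self_sqrt (by norm_num)]; norm_num]
    norm_num
  have horth' : star ψ₂ ⬝ᵥ ψ₁ = 0 := by
    have h := congrArg (starRingEnd ℂ) horth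
    simpa [dotProduct, map_sum, mul_comm] using h
  have hψs : star ψ = t • (star ψ₁ + e⁻¹ • star ψ₂) := by
    rw [hψ]
    ext k
    simp [Pi.smul_apply, hce, hct, mul_add, mul_comm]
  have hdψs : star dψ = (Complex.I * θ'' * e⁻¹ * t) • star ψ₂ := by
    rw [hdψ]
    ext k
    simp [Pi.smul_apply, hce, hct, Complex.conj_ofReal]
  have hd1 : star ψ ⬝ᵥ ψ = 1 := by
    rw [hψs, hψ]
    simp only [smul_dotProduct, dotProduct_smul, add_dotProduct, dotProduct_add,
      hψ₁n, hψ₂n, horth, horth', smul_eq_mul]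
    field_simp
    rw [sq, ht2]; ring
  have hd2 : star ψ ⬝ᵥ dψ = -(Complex.I * θ'') / 2 := by
    rw [hψs, hdψ]
    simp only [smul_dotProduct, dotProduct_smul, add_dotProduct,
      hψ₂n, horth, smul_eq_mul]
    field_simp
    rw [sq, ht2]; ring
  have hd3 : star dψ ⬝ᵥ ψ = (Complex.I * θ'') / 2 := by
    rw [hdψs, hψ]
    simp only [smul_dotProduct, dotProduct_smul, dotProduct_add,
      hψ₂n, horth', smul_eq_mul]
    field_simp
    rw [sq, ht2]; ring
  rw [hM, hL]
  rw [Matrix.mul_smul, Matrix.smul_mul, Matrix.mul_add, Matrix.add_mul,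
    vmv_mul, vmv_mul, vmv_mul, vmv_mul, hd1, hd2, hd3]
  ext i j
  rw [hψ, hdψ] at *
  simp only [Matrix.smul_apply, Matrix.sub_apply, Matrix.add_apply, vecMulVec_apply,
    Pi.smul_apply, Pi.add_apply, Pi.star_apply, smul_eq_mul, one_smul,
    star_mul', star_add, hce, hct, _root_.map_mul, map_add, Complex.conj_ofReal,
    map_neg, Complex.conj_I, map_ofNat, RCLike.star_def]
  field_simp
  rw [sq, ht2]; ring
end
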